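/- arXiv:1001.1237 — 3 statements merged into one kernel-verified Lean document; each statement's English description precedes it below -/
import Mathlib

section
/- Let V be a finite-dimensional complex vector space with dim V = g−1 ≥ 2, and let x_1,…,x_{g+1} ∈ V be such that any g−1 of x_1,…,x_{g+1} are linearly independent (general position). Then the set of wedge products { x_{i_1} ∧ ⋯ ∧ x_{i_{g-2}} : {i_1,…,i_{g-2}} ⊂ {1,…,g+1} } spans ⋀^{g-2} V. -/
open ExteriorAlgebra

/-- If `x_1, …, x_{g+1}` are vectors in general position (any `g-1` linearly independent)
in a `(g-1)`-dimensional complex vector space `V`, then the wedge products of `(g-2)`-element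
subsets of them span `⋀[ℂ]^{g-2} V`. -/
theorem steiner_wedges_span (g : ℕ) (hg : 3 ≤ g)
    (V : Type) [AddCommGroup V] [Module ℂ V] [FiniteDimensional ℂ V]
    (hdim : Module.finrank ℂ V = g - 1)
    (x : Fin (g + 1) → V)
    (hgen : ∀ s : Finset (Fin (g + 1)), s.card = g - 1 →
      LinearIndependent ℂ (fun i : s => x i)) :
    Submodule.span ℂ
      {w : ExteriorAlgebra ℂ V | ∃ f : Fin (g - 2) → Fin (g + 1),
        StrictMono f ∧ w = ExteriorAlgebra.ιMulti ℂ (g - 2) (x ∘ f)} =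
    (⋀[ℂ]^(g - 2) V : Submodule ℂ (ExteriorAlgebra ℂ V)) := by
  set S : Set (ExteriorAlgebra ℂ V) :=
    {w : ExteriorAlgebra ℂ V | ∃ f : Fin (g - 2) → Fin (g + 1),
        StrictMono f ∧ w = ExteriorAlgebra.ιMulti ℂ (g - 2) (x ∘ f)} with hS
  -- Key: for ANY function `F : Fin (g-2) → Fin (g+1)`, the wedge lies in the span of `S`.
  have key : ∀ F : Fin (g - 2) → Fin (g + 1),
      ExteriorAlgebra.ιMulti ℂ (g - 2) (x ∘ F) ∈ Submodule.span ℂ S := by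
    intro F
    by_cases hF : Function.Injective F
    · -- sort `F` into a strictly monotone map `f'` and a permutation `σ`
      set s : Finset (Fin (g + 1)) := Finset.image F Finset.univ with hs
      have hcard : s.card = g - 2 := by
        rw [hs, Finset.card_image_of_injective _ hF, Finset.card_univ, Fintype.card_fin]
      set mono : Fin (g - 2) ≃o s := s.orderIsoOfFin hcard with hmono
      have hmem : ∀ i, F i ∈ s := by
        intro i; rw [hs]; exact Finset.mem_image_of_mem F (Finset.mem_univ i)
      have hinj : Function.Injective (fun i => mono.symm ⟨F i, hmem i⟩) := by
        intro a b hab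
        apply hF
        have := congrArg mono hab
        simpa using congrArg Subtype.val this
      have hbij : Function.Bijective (fun i => mono.symm ⟨F i, hmem i⟩) :=
        Finite.injective_iff_bijective.mp hinj
      set σ : Equiv.Perm (Fin (g - 2)) := Equiv.ofBijective _ hbij with hσ
      set f' : Fin (g - 2) → Fin (g + 1) := fun i => (mono i : Fin (g + 1)) with hf'
      have hf'mono : StrictMono f' := by
        intro a b hab
        exact mono.strictMono hab
      have hFf' : x ∘ F = (x ∘ f') ∘ σ := by
        funext i
        simp only [Function.comp_apply, hσ, Equiv.ofBijective_apply, hf']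
        congr 1
        have : mono (mono.symm ⟨F i, hmem i⟩) = ⟨F i, hmem i⟩ := mono.apply_symm_apply _
        rw [this]
      rw [hFf', AlternatingMap.map_perm]
      exact Submodule.smul_mem _ _ (Submodule.subset_span ⟨f', hf'mono, rfl⟩)
    · -- not injective: the wedge is zero
      rw [Function.not_injective_iff] at hF
      obtain ⟨a, b, hab, hne⟩ := hF
      have : ExteriorAlgebra.ιMulti ℂ (g - 2) (x ∘ F) = 0 :=
        AlternatingMap.map_eq_zero_of_eq _ _ (by simp [Function.comp, hab]) hne
      rw [this]; exact Submodule.zero_mem _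
  apply le_antisymm
  · rw [Submodule.span_le]
    rintro w ⟨f, hf, rfl⟩
    exact ExteriorAlgebra.ιMulti_range ℂ (g - 2) ⟨x ∘ f, rfl⟩
  · rw [← ExteriorAlgebra.ιMulti_span_fixedDegree, Submodule.span_le]
    rintro w ⟨v, rfl⟩
    -- the first g-1 vectors form a basis
    have hle : g - 1 ≤ g + 1 := by omega
    have hcard1 : (Finset.image (Fin.castLE hle) Finset.univ : Finset (Fin (g + 1))).card
        = g - 1 := by
      rw [Finset.card_image_of_injective _ (Fin.castLE_injective hle), Finset.card_univ,
        Fintype.card_fin]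
    have hli0 := hgen _ hcard1
    have hli : LinearIndependent ℂ (fun i : Fin (g - 1) => x (Fin.castLE hle i)) :=
      hli0.comp
        (fun i => ⟨Fin.castLE hle i, Finset.mem_image_of_mem _ (Finset.mem_univ i)⟩)
        (fun a b hab => Fin.castLE_injective hle (congrArg Subtype.val hab))
    have : Nonempty (Fin (g - 1)) := ⟨⟨0, by omega⟩⟩
    have hcard2 : Fintype.card (Fin (g - 1)) = Module.finrank ℂ V := by
      rw [Fintype.card_fin, hdim]
    set b : Module.Basis (Fin (g - 1)) ℂ V := basisOfLinearIndependentOfCardEqFinrank hli hcard2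
      with hb
    have hbx : ∀ i, b i = x (Fin.castLE hle i) := by
      intro i
      rw [hb, coe_basisOfLinearIndependentOfCardEqFinrank]
    -- expand each v j in the basis
    have hv : ∀ j, v j = ∑ k : Fin (g - 1), b.repr (v j) k • b k := by
      intro j
      exact (b.sum_repr (v j)).symm
    have hexp : (ExteriorAlgebra.ιMulti ℂ (g - 2) : AlternatingMap ℂ V _ _) v
        = ∑ r : Fin (g - 2) → Fin (g - 1),
            (∏ j, b.repr (v j) (r j)) •
              (ExteriorAlgebra.ιMulti ℂ (g - 2)) (x ∘ (Fin.castLE hle ∘ r)) := by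
      calc (ExteriorAlgebra.ιMulti ℂ (g - 2) : AlternatingMap ℂ V _ _) v
          = (ExteriorAlgebra.ιMulti ℂ (g - 2))
              (fun j => ∑ k : Fin (g - 1), b.repr (v j) k • b k) := by
            congr 1; funext j; exact hv j
        _ = ∑ r : Fin (g - 2) → Fin (g - 1),
              (ExteriorAlgebra.ιMulti ℂ (g - 2)) (fun j => b.repr (v j) (r j) • b (r j)) :=
            (ExteriorAlgebra.ιMulti ℂ (g - 2)).toMultilinearMap.map_sum
              (fun j k => b.repr (v j) k • b k)
        _ = ∑ r : Fin (g - 2) → Fin (g - 1),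
              (∏ j, b.repr (v j) (r j)) •
                (ExteriorAlgebra.ιMulti ℂ (g - 2)) (x ∘ (Fin.castLE hle ∘ r)) := by
            refine Finset.sum_congr rfl fun r _ => ?_
            have h1 : (ExteriorAlgebra.ιMulti ℂ (g - 2))
                (fun j => b.repr (v j) (r j) • b (r j))
                = (∏ j, b.repr (v j) (r j)) •
                  (ExteriorAlgebra.ιMulti ℂ (g - 2)) (fun j => b (r j)) :=
              (ExteriorAlgebra.ιMulti ℂ (g - 2)).toMultilinearMap.map_smul_univ _ _
            rw [h1]
            have h2 : (fun j => b (r j)) = x ∘ Fin.castLE hle ∘ r := by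
              funext j; exact hbx (r j)
            rw [h2]
    rw [hexp]
    exact Submodule.sum_mem _ fun r _ =>
      Submodule.smul_mem _ _ (key (Fin.castLE hle ∘ r))
end

section
/- Let V be a g-dimensional complex vector space, g ≥ 3, with basis x_1,…,x_g, and let x_{g+1},…,x_{2g} be additional vectors such that every g of the 2g vectors x_1,…,x_{2g} are linearly independent. Then the collection { x_{i_1} ∧ ⋯ ∧ x_{i_{g-2}} : {i_1,…,i_{g-2}} ⊆ {1,…,2g} of size g−2 } spans ⋀^{g-2} V. -/
open ExteriorAlgebra

namespace ExteriorAlgebra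

variable {R M I : Type*} [CommRing R] [AddCommGroup M] [Module R M] [LinearOrder I]

theorem setOf_ιMulti_comp_strictMono_eq_range_ιMulti_family (n : ℕ) (v : I → M) :
    {w : ExteriorAlgebra R M | ∃ f : Fin n → I, StrictMono f ∧ w = ιMulti R n (v ∘ f)} =
      Set.range (ιMulti_family R n v) := by
  ext w
  constructor
  · rintro ⟨f, hf, rfl⟩
    refine ⟨Set.powersetCard.ofFinEmbEquiv (OrderEmbedding.ofStrictMono f hf), ?_⟩
    rw [ιMulti_family, Equiv.symm_apply_apply, OrderEmbedding.coe_ofStrictMono]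
  · rintro ⟨s, rfl⟩
    exact ⟨_, (Set.powersetCard.ofFinEmbEquiv.symm s).strictMono, rfl⟩

theorem span_ιMulti_comp_strictMono_of_span_eq_top (n : ℕ) {v : I → M}
    (hv : Submodule.span R (Set.range v) = ⊤) :
    Submodule.span R
        {w : ExteriorAlgebra R M | ∃ f : Fin n → I, StrictMono f ∧ w = ιMulti R n (v ∘ f)} =
      ⋀[R]^n M := by
  rw [setOf_ιMulti_comp_strictMono_eq_range_ιMulti_family,
    exteriorPower.ιMulti_family_span_fixedDegree_of_span R hv]

end ExteriorAlgebra

theorem wedges_of_general_position_span_general (g : ℕ)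
    (V : Type) [AddCommGroup V] [Module ℂ V] [FiniteDimensional ℂ V]
    (hdim : Module.finrank ℂ V = g)
    (x : Fin (2 * g) → V)
    (hgen : ∀ s : Finset (Fin (2 * g)), s.card = g →
      LinearIndependent ℂ (fun i : s => x i)) :
    Submodule.span ℂ
      {w : ExteriorAlgebra ℂ V | ∃ f : Fin (g - 2) → Fin (2 * g),
        StrictMono f ∧ w = ExteriorAlgebra.ιMulti ℂ (g - 2) (x ∘ f)} =
    (⋀[ℂ]^(g - 2) V : Submodule ℂ (ExteriorAlgebra ℂ V)) := by
  obtain ⟨s, -, hs⟩ := Finset.exists_subset_card_eq (s := Finset.univ)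
    (show g ≤ (Finset.univ : Finset (Fin (2 * g))).card by simp; omega)
  have hspan_s : Submodule.span ℂ (Set.range fun i : s => x i) = ⊤ :=
    (hgen s hs).span_eq_top_of_card_eq_finrank' (by simp [hs, hdim])
  have hspan : Submodule.span ℂ (Set.range x) = ⊤ :=
    top_unique (hspan_s ▸ Submodule.span_mono (Set.range_comp_subset_range _ x))
  exact span_ιMulti_comp_strictMono_of_span_eq_top (g - 2) hspan

/-- If `x_1, …, x_{2g}` are vectors in general position (any `g` linearly independent)
in a `g`-dimensional complex vector space `V`, `g ≥ 3`, then the wedge products of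
`(g-2)`-element subsets of them span `⋀^{g-2} V`. -/
theorem wedges_of_general_position_span (g : ℕ) (hg : 3 ≤ g)
    (V : Type) [AddCommGroup V] [Module ℂ V] [FiniteDimensional ℂ V]
    (hdim : Module.finrank ℂ V = g)
    (x : Fin (2 * g) → V)
    (hgen : ∀ s : Finset (Fin (2 * g)), s.card = g →
      LinearIndependent ℂ (fun i : s => x i)) :
    Submodule.span ℂ
      {w : ExteriorAlgebra ℂ V | ∃ f : Fin (g - 2) → Fin (2 * g),
        StrictMono f ∧ w = ExteriorAlgebra.ιMulti ℂ (g - 2) (x ∘ f)} =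
    (⋀[ℂ]^(g - 2) V : Submodule ℂ (ExteriorAlgebra ℂ V)) :=
  wedges_of_general_position_span_general g V hdim x hgen
end

section
/- Let W be a 3-dimensional complex vector space and let (L_1, L_1'), …, (L_6, L_6') be six pairs of nonzero linear forms on W such that the six singular points p_i of the conics {L_i L_i' = 0} (i.e., the intersection points of the lines L_i = 0 and L_i' = 0) lie on a smooth conic but are otherwise generic. Then the six quadratic forms L_i L_i' ∈ Sym²(W*) span a subspace of dimension at least 3; in particular no three of the forms L_i L_i' can be pairwise non-proportional and collinear in ℙ Sym²(W*) if their singular points are distinct points of a smooth conic in general position. -/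
/-!
The polar form of `L L'` has as radical exactly the line through its singular point. If the six
forms spanned at most a plane, that plane would be the pencil spanned by `Q₀ = L₀ L₀'` and
`Q₁ = L₁ L₁'`, which are independent because their radicals differ. For a member
`Q = s Q₀ + t Q₁` singular at `p`, evaluating the polar form at `(p, p₁)` kills the `Q₁`-term
and forces `s ≠ 0`, so `p` lies on the polar line of `p₁` with respect to `Q₀`; so does `p₀`.
Hence `p₀, p₂, p₃` are three collinear points of the smooth conic `q = 0`, so `q` vanishes on
a plane of `W`; but a nondegenerate form on a space of dimension `3` has no totally isotropic
subspace of dimension `2`.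
-/

open Module Submodule QuadraticMap

section LinearAlgebra

variable {K V : Type*} [Field K] [AddCommGroup V] [Module K V]

theorem finrank_ker_inf_ker_add_two [FiniteDimensional K V] {f g : Dual K V}
    (hfg : LinearIndependent K ![f, g]) :
    finrank K ↥(LinearMap.ker f ⊓ LinearMap.ker g) + 2 = finrank K V := by
  have hker : LinearMap.ker f ⊓ LinearMap.ker g = (span K {f, g}).dualCoannihilator :=
    SetLike.coe_injective <| by ext; simp
  have hspan : finrank K (span K {f, g}) = 2 := by
    rw [← Matrix.range_cons_cons_empty f g ![], finrank_span_eq_card hfg, Fintype.card_fin]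
  rw [hker, ← hspan, add_comm]
  exact Subspace.finrank_add_finrank_dualCoannihilator_eq _

theorem mem_span_pair_of_finrank_span_range_le_two {ι : Type*} [Finite ι] {v : ι → V} {i j : ι}
    (hij : LinearIndependent K ![v i, v j]) (hv : finrank K (span K (Set.range v)) ≤ 2) (k : ι) :
    v k ∈ span K {v i, v j} := by
  have : FiniteDimensional K (span K (Set.range v)) :=
    FiniteDimensional.span_of_finite K (Set.finite_range v)
  have hle : span K {v i, v j} ≤ span K (Set.range v) :=
    span_mono (Set.pair_subset (Set.mem_range_self i) (Set.mem_range_self j))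
  have hfin : finrank K (span K {v i, v j}) = 2 := by
    rw [← Matrix.range_cons_cons_empty (v i) (v j) ![], finrank_span_eq_card hij, Fintype.card_fin]
  rw [eq_of_le_of_finrank_le hle (hfin ▸ hv)]
  exact subset_span (Set.mem_range_self k)

theorem LinearMap.BilinForm.two_mul_finrank_le_of_le_orthogonal [FiniteDimensional K V]
    {B : LinearMap.BilinForm K V} (hB : B.Nondegenerate) {H : Submodule K V}
    (hH : H ≤ B.orthogonal H) : 2 * finrank K H ≤ finrank K V := by
  have := finrank_mono hH
  rw [LinearMap.BilinForm.finrank_orthogonal hB] at this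
  have := H.finrank_le
  omega

end LinearAlgebra

namespace QuadraticMap

section CommRing

variable {R M N : Type*} [CommRing R] [AddCommGroup M] [Module R M] [AddCommGroup N] [Module R N]

@[simp]
theorem polarBilin_zero : polarBilin (0 : QuadraticMap R M N) = 0 := by
  ext x y
  simp [polar]

@[simp]
theorem polarBilin_add (Q Q' : QuadraticMap R M N) :
    polarBilin (Q + Q') = polarBilin Q + polarBilin Q' := by
  ext x y
  simp [polar_add]

@[simp]
theorem polarBilin_smul (a : R) (Q : QuadraticMap R M N) :
    polarBilin (a • Q) = a • polarBilin Q := by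
  ext x y
  simp [polar_smul]

theorem polarBilin_linMulLin_apply (f g : M →ₗ[R] R) (x : M) :
    polarBilin (linMulLin f g) x = g x • f + f x • g := by
  ext y
  simp only [polarBilin_apply_apply, polar, linMulLin_apply, map_add, LinearMap.add_apply,
    LinearMap.smul_apply, smul_eq_mul]
  ring

end CommRing

variable {K V : Type*} [Field K] [AddCommGroup V] [Module K V]

theorem ker_polarBilin_linMulLin {f g : Dual K V} (hfg : LinearIndependent K ![f, g]) :
    LinearMap.ker (polarBilin (linMulLin f g)) = LinearMap.ker f ⊓ LinearMap.ker g := by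
  ext x
  rw [LinearMap.mem_ker, polarBilin_linMulLin_apply, mem_inf, LinearMap.mem_ker,
    LinearMap.mem_ker]
  refine ⟨fun h => (LinearIndependent.pair_iff.1 hfg _ _ h).symm, fun ⟨hf, hg⟩ => ?_⟩
  simp [hf, hg]

theorem ker_polarBilin_linMulLin_eq_span_singleton (hV : finrank K V = 3) {f g : Dual K V}
    (hfg : LinearIndependent K ![f, g]) {p : V} (hp : p ≠ 0) (hfp : f p = 0) (hgp : g p = 0) :
    LinearMap.ker (polarBilin (linMulLin f g)) = K ∙ p := by
  have : FiniteDimensional K V := .of_finrank_pos (by omega)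
  rw [ker_polarBilin_linMulLin hfg]
  refine (eq_of_le_of_finrank_le ((span_singleton_le_iff_mem _ _).2 (mem_inf.2 ⟨hfp, hgp⟩))
    ?_).symm
  have := finrank_ker_inf_ker_add_two hfg
  rw [finrank_span_singleton hp]
  omega

theorem linearIndependent_pair_of_polarBilin {Q₀ Q₁ : QuadraticForm K V} {p₀ p₁ : V}
    (h₀ : polarBilin Q₀ p₀ = 0) (h₁ : polarBilin Q₁ p₁ = 0) (h₀₁ : polarBilin Q₀ p₁ ≠ 0)
    (h₁₀ : polarBilin Q₁ p₀ ≠ 0) : LinearIndependent K ![Q₀, Q₁] := by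
  refine LinearIndependent.pair_iff.2 fun s t hst => ⟨?_, ?_⟩
  · simpa [h₁, h₀₁] using congr(polarBilin $hst p₁)
  · simpa [h₀, h₁₀] using congr(polarBilin $hst p₀)

theorem polarBilin_apply_eq_zero_of_mem_span_pair {Q₀ Q₁ Q : QuadraticForm K V} {p p₁ : V}
    (hQ : Q ∈ span K {Q₀, Q₁}) (hp : polarBilin Q p = 0) (hp₁ : polarBilin Q₁ p₁ = 0)
    (hQp₁ : polarBilin Q p₁ ≠ 0) : polarBilin Q₀ p₁ p = 0 := by
  obtain ⟨s, t, rfl⟩ := mem_span_pair.1 hQ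
  have hs : s ≠ 0 := by
    rintro rfl
    simp [hp₁] at hQp₁
  have h := congr($hp p₁)
  rw [polarBilin_apply_apply, polar_comm, ← polarBilin_apply_apply] at h
  simpa [hp₁, hs] using h

theorem polar_eq_zero_of_apply_smul_add_smul_eq_zero {q : QuadraticForm K V} {u v : V} {a b : K}
    (hu : q u = 0) (hv : q v = 0) (ha : a ≠ 0) (hb : b ≠ 0) (huv : q (a • u + b • v) = 0) :
    polar q u v = 0 := by
  rw [QuadraticMap.map_add (⇑q), QuadraticMap.map_smul, QuadraticMap.map_smul, polar_smul_left,
    polar_smul_right, hu, hv] at huv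
  simpa [ha, hb] using huv

theorem polar_eq_zero_of_isotropic_of_finrank_le_two [FiniteDimensional K V]
    {q : QuadraticForm K V} {H : Submodule K V} (hH : finrank K H ≤ 2) {u v w : V} (hu : u ∈ H)
    (hv : v ∈ H) (hw : w ∈ H) (hqu : q u = 0) (hqv : q v = 0) (hqw : q w = 0)
    (huv : LinearIndependent K ![u, v]) (huw : LinearIndependent K ![u, w])
    (hvw : LinearIndependent K ![v, w]) : polar q u v = 0 := by
  have hspan : span K {u, v} = H := by
    refine eq_of_le_of_finrank_le (span_le.2 (Set.pair_subset hu hv)) ?_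
    rwa [← Matrix.range_cons_cons_empty u v ![], finrank_span_eq_card huv, Fintype.card_fin]
  obtain ⟨a, b, rfl⟩ := mem_span_pair.1 (hspan ▸ hw)
  have ha : a ≠ 0 := by
    rintro rfl
    simpa using LinearIndependent.pair_iff.1 hvw b (-1) (by simp)
  have hb : b ≠ 0 := by
    rintro rfl
    simpa using LinearIndependent.pair_iff.1 huw a (-1) (by simp)
  exact polar_eq_zero_of_apply_smul_add_smul_eq_zero hqu hqv ha hb hqw

theorem four_le_finrank_of_isotropic_pair [FiniteDimensional K V] {q : QuadraticForm K V}
    (hq : (polarBilin q).Nondegenerate) {u v : V} (huv : LinearIndependent K ![u, v])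
    (hu : q u = 0) (hv : q v = 0) (h : polar q u v = 0) : 4 ≤ finrank K V := by
  have h' : polar q v u = 0 := by rwa [polar_comm]
  have hpolar : ∀ x ∈ ({u, v} : Set V), ∀ y ∈ ({u, v} : Set V), polarBilin q x y = 0 := by
    rintro x (rfl | rfl) y (rfl | rfl) <;> simp [polar_self, *]
  have hle : span K {u, v} ≤ LinearMap.BilinForm.orthogonal (polarBilin q) (span K {u, v}) := by
    refine span_le.2 fun y hy => LinearMap.BilinForm.mem_orthogonal_iff.2 fun x hx => ?_
    exact span_induction (p := fun x _ => polarBilin q x y = 0) (fun x hx => hpolar x hx y hy)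
      (by simp) (fun _ _ _ _ h₁ h₂ => by simp [h₁, h₂]) (fun _ _ _ h => by simp [h]) hx
  have := LinearMap.BilinForm.two_mul_finrank_le_of_le_orthogonal hq hle
  rw [← Matrix.range_cons_cons_empty u v ![], finrank_span_eq_card huv, Fintype.card_fin] at this
  omega

end QuadraticMap

/-- Let `W ≅ ℂ³` and let `(L_i, L_i')`, `i = 1,…,6`, be pairs of independent linear forms
on `W`, so each conic `{L_i L_i' = 0}` is a pair of lines with unique singular point
`p_i`.  If the `p_i` are pairwise distinct (projectively) and lie on a smooth conic, then
the six quadratic forms `L_i L_i'` span a subspace of `Sym²(W*)` of dimension at least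
`3`. -/
theorem line_pair_quadrics_span (W : Type) [AddCommGroup W] [Module ℂ W]
    [FiniteDimensional ℂ W] (hW : Module.finrank ℂ W = 3)
    (L L' : Fin 6 → W →ₗ[ℂ] ℂ)
    (hind : ∀ i, LinearIndependent ℂ ![L i, L' i])
    (p : Fin 6 → W) (hp0 : ∀ i, p i ≠ 0)
    (hsing : ∀ i, L i (p i) = 0 ∧ L' i (p i) = 0)
    (hdist : ∀ i j, i ≠ j → ∀ c : ℂ, p j ≠ c • p i)
    (q : QuadraticForm ℂ W) (hconic : ∀ i, q (p i) = 0)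
    (hsmooth : (QuadraticMap.polarBilin q).Nondegenerate) :
    3 ≤ Module.finrank ℂ
      ↥(Submodule.span ℂ
        (Set.range fun i => QuadraticMap.linMulLin (L i) (L' i))) := by
  set Q : Fin 6 → QuadraticForm ℂ W := fun i => linMulLin (L i) (L' i)
  have hrad : ∀ i j, polarBilin (Q i) (p j) = 0 ↔ i = j := by
    intro i j
    rw [← LinearMap.mem_ker,
      ker_polarBilin_linMulLin_eq_span_singleton hW (hind i) (hp0 i) (hsing i).1 (hsing i).2,
      mem_span_singleton]
    refine ⟨fun ⟨c, hc⟩ => by_contra fun hij => hdist i j hij c hc.symm, ?_⟩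
    rintro rfl
    exact ⟨1, one_smul _ _⟩
  have hpair : ∀ i j, i ≠ j → LinearIndependent ℂ ![p i, p j] := fun i j hij =>
    (LinearIndependent.pair_iff' (hp0 i)).2 fun c hc => hdist i j hij c hc.symm
  by_contra! hlt
  have hpencil : ∀ i, Q i ∈ span ℂ {Q 0, Q 1} :=
    mem_span_pair_of_finrank_span_range_le_two
      (linearIndependent_pair_of_polarBilin ((hrad 0 0).2 rfl) ((hrad 1 1).2 rfl)
        (by simp [hrad]) (by simp [hrad])) (Nat.lt_succ_iff.1 hlt)
  set H := LinearMap.ker (polarBilin (Q 0) (p 1))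
  have hH : finrank ℂ H ≤ 2 := by
    have := Submodule.finrank_lt (s := H) (by rw [Ne, LinearMap.ker_eq_top, hrad]; decide)
    omega
  have hmem : ∀ i, i ≠ 1 → p i ∈ H := fun i hi =>
    polarBilin_apply_eq_zero_of_mem_span_pair (hpencil i) ((hrad i i).2 rfl) ((hrad 1 1).2 rfl)
      (by rwa [Ne, hrad])
  have := four_le_finrank_of_isotropic_pair hsmooth (hpair 0 2 (by decide)) (hconic 0) (hconic 2)
    (polar_eq_zero_of_isotropic_of_finrank_le_two hH (hmem 0 (by decide)) (hmem 2 (by decide))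
      (hmem 3 (by decide)) (hconic 0) (hconic 2) (hconic 3) (hpair 0 2 (by decide))
      (hpair 0 3 (by decide)) (hpair 2 3 (by decide)))
  omega
end
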